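/- A linear hypergraph H is α-acyclic if and only if its Levi graph B(H) is a forest. -/

import Mathlib

structure FinHypergraph (V : Type*) where
  verts : Finset V
  edges : Finset (Finset V)
  edge_sub : ∀ s ∈ edges, s ⊆ verts
  edge_nonempty : ∀ s ∈ edges, s.Nonempty

namespace FinHypergraph

variable {V : Type*} [DecidableEq V]

/-- The degree of a vertex: the number of edges containing it. -/
def degree (H : FinHypergraph V) (x : V) : ℕ :=
  (H.edges.filter fun s => x ∈ s).card

/-- Δ(H): the maximum degree. -/
def maxDegree (H : FinHypergraph V) : ℕ :=
  H.verts.sup H.degree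

/-- r(H): the maximum cardinality of an edge. -/
def rank (H : FinHypergraph V) : ℕ :=
  H.edges.sup Finset.card

/-- An incidence of H: a pair (x, s) with s an edge and x ∈ s. -/
def IsIncidence (H : FinHypergraph V) (p : V × Finset V) : Prop :=
  p.2 ∈ H.edges ∧ p.1 ∈ p.2

/-- Two (distinct) incidences (x,s), (x',s') are adjacent if x = x', or {x,x'} ⊆ s,
or {x,x'} ⊆ s'. -/
def IncAdj (p q : V × Finset V) : Prop :=
  p ≠ q ∧ (p.1 = q.1 ∨ ({p.1, q.1} : Finset V) ⊆ p.2 ∨ ({p.1, q.1} : Finset V) ⊆ q.2)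

/-- A proper incidence k-coloring: adjacent incidences get distinct colors from {0, ..., k-1}. -/
def HasIncidenceColoring (H : FinHypergraph V) (k : ℕ) : Prop :=
  ∃ φ : V × Finset V → ℕ,
    (∀ p, H.IsIncidence p → φ p < k) ∧
    (∀ p q, H.IsIncidence p → H.IsIncidence q → IncAdj p q → φ p ≠ φ q)

/-- χ_I(H): the incidence chromatic number. -/
noncomputable def incChromaticNumber (H : FinHypergraph V) : ℕ :=
  sInf {k | H.HasIncidenceColoring k}

/-- H is t-quasi-linear: two distinct edges meet in at most t vertices, and two
distinct vertices lie in at most t common edges. -/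
def QuasiLinear (H : FinHypergraph V) (t : ℕ) : Prop :=
  (∀ s ∈ H.edges, ∀ s' ∈ H.edges, s ≠ s' → (s ∩ s').card ≤ t) ∧
  (∀ x ∈ H.verts, ∀ y ∈ H.verts, x ≠ y →
    (H.edges.filter fun s => x ∈ s ∧ y ∈ s).card ≤ t)

/-- H is linear: two distinct edges meet in at most one vertex. -/
def Linear (H : FinHypergraph V) : Prop :=
  ∀ s ∈ H.edges, ∀ s' ∈ H.edges, s ≠ s' → (s ∩ s').card ≤ 1

/-- The Levi graph B(H): bipartite incidence graph between vertices and edges of H. -/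
def Levi (H : FinHypergraph V) : SimpleGraph (V ⊕ Finset V) where
  Adj a b :=
    match a, b with
    | Sum.inl x, Sum.inr s => s ∈ H.edges ∧ x ∈ s
    | Sum.inr s, Sum.inl x => s ∈ H.edges ∧ x ∈ s
    | _, _ => False
  symm := by
    constructor
    rintro (x | s) (y | t) h <;> exact h
  loopless := by
    constructor
    rintro (x | s) h <;> exact h

end FinHypergraph

/-- One step of GYO-reduction on a pair (vertex set, edge set):
(i) delete a vertex contained in only one edge (together with its occurrence in edges);
(ii) delete an edge contained in another edge;
(iii) delete an edge containing no vertex. -/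
inductive GYOStep {V : Type*} [DecidableEq V] :
    Finset V × Finset (Finset V) → Finset V × Finset (Finset V) → Prop
  | delVertex (X : Finset V) (S : Finset (Finset V)) (x : V) (hx : x ∈ X)
      (h : (S.filter fun s => x ∈ s).card ≤ 1) :
      GYOStep (X, S) (X.erase x, S.image fun s => s.erase x)
  | delSubEdge (X : Finset V) (S : Finset (Finset V)) (s s' : Finset V)
      (hs : s ∈ S) (hs' : s' ∈ S) (hne : s ≠ s') (hsub : s ⊆ s') :
      GYOStep (X, S) (X, S.erase s)
  | delEmptyEdge (X : Finset V) (S : Finset (Finset V)) (h : (∅ : Finset V) ∈ S) :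
      GYOStep (X, S) (X, S.erase ∅)

/-- H is α-acyclic: GYO-reduction reduces it to the empty hypergraph. -/
def FinHypergraph.IsAlphaAcyclic {V : Type*} [DecidableEq V] (H : FinHypergraph V) : Prop :=
  Relation.ReflTransGen GYOStep (H.verts, H.edges) (∅, ∅)



open SimpleGraph

section WalkAux

variable {W W' : Type*} {G : SimpleGraph W} {G' : SimpleGraph W'}

/-- Map a walk along a vertex function that preserves adjacency on the walk's edges. -/
def mapWalk (f : W → W') :
    {a b : W} → (p : G.Walk a b) →
      (∀ x y, s(x, y) ∈ p.edges → G'.Adj (f x) (f y)) → G'.Walk (f a) (f b)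
  | _, _, .nil, _ => .nil
  | _, _, .cons h p, H =>
      .cons (H _ _ (by simp)) (mapWalk f p fun x y hxy => H x y (by simp [hxy]))

lemma mapWalk_length (f : W → W') :
    ∀ {a b : W} (p : G.Walk a b) (H : ∀ x y, s(x, y) ∈ p.edges → G'.Adj (f x) (f y)),
      (mapWalk f p H).length = p.length
  | _, _, .nil, _ => rfl
  | _, _, .cons h p, H => by
      simp only [mapWalk, SimpleGraph.Walk.length_cons, mapWalk_length f p]

lemma mapWalk_support (f : W → W') :
    ∀ {a b : W} (p : G.Walk a b) (H : ∀ x y, s(x, y) ∈ p.edges → G'.Adj (f x) (f y)),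
      (mapWalk f p H).support = p.support.map f
  | _, _, .nil, _ => rfl
  | _, _, .cons h p, H => by
      simp only [mapWalk, SimpleGraph.Walk.support_cons, List.map_cons, mapWalk_support f p]

lemma mapWalk_edges (f : W → W') :
    ∀ {a b : W} (p : G.Walk a b) (H : ∀ x y, s(x, y) ∈ p.edges → G'.Adj (f x) (f y)),
      (mapWalk f p H).edges = p.edges.map (Sym2.map f)
  | _, _, .nil, _ => rfl
  | _, _, .cons h p, H => by
      simp only [mapWalk, SimpleGraph.Walk.edges_cons, List.map_cons, mapWalk_edges f p,
        Sym2.map_pair_eq]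

lemma isCycle_mapWalk (f : W → W') {u : W} (c : G.Walk u u)
    (H : ∀ x y, s(x, y) ∈ c.edges → G'.Adj (f x) (f y)) (hc : c.IsCycle)
    (hinj : ∀ a ∈ c.support, ∀ b ∈ c.support, f a = f b → a = b) :
    (mapWalk f c H).IsCycle := by
  have hinj2 : ∀ e1 ∈ c.edges, ∀ e2 ∈ c.edges, Sym2.map f e1 = Sym2.map f e2 → e1 = e2 := by
    intro e1 he1 e2 he2 heq
    revert he1 he2 heq
    refine Sym2.inductionOn₂ e1 e2 ?_
    intro x y x' y' he1 he2 heq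
    have hx := c.fst_mem_support_of_mem_edges he1
    have hy := c.snd_mem_support_of_mem_edges he1
    have hx' := c.fst_mem_support_of_mem_edges he2
    have hy' := c.snd_mem_support_of_mem_edges he2
    rw [Sym2.map_pair_eq, Sym2.map_pair_eq, Sym2.eq_iff] at heq
    rw [Sym2.eq_iff]
    rcases heq with ⟨h1, h2⟩ | ⟨h1, h2⟩
    · exact Or.inl ⟨hinj _ hx _ hx' h1, hinj _ hy _ hy' h2⟩
    · exact Or.inr ⟨hinj _ hx _ hy' h1, hinj _ hy _ hx' h2⟩
  refine ⟨⟨⟨?_⟩, ?_⟩, ?_⟩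
  · rw [mapWalk_edges]
    exact (hc.isCircuit.isTrail.edges_nodup).map_on hinj2
  · intro hnil
    have := congrArg SimpleGraph.Walk.length hnil
    rw [mapWalk_length] at this
    have h3 := hc.three_le_length
    simp only [SimpleGraph.Walk.length_nil] at this
    omega
  · rw [mapWalk_support, c.support_eq_cons, List.map_cons, List.tail_cons]
    refine (hc.support_nodup).map_on ?_
    intro a ha b hb hab
    have ha' : a ∈ c.support := by rw [c.support_eq_cons]; exact List.mem_cons_of_mem _ ha
    have hb' : b ∈ c.support := by rw [c.support_eq_cons]; exact List.mem_cons_of_mem _ hb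
    exact hinj _ ha' _ hb' hab

lemma isPath_loop_eq_nil {v : W} {p : G.Walk v v} (hp : p.IsPath) : p = SimpleGraph.Walk.nil := by
  have h := SimpleGraph.Path.loop_eq (⟨p, hp⟩ : G.Path v v)
  simpa using congrArg Subtype.val h

lemma exists_adj_of_mem_support {a b v : W} (p : G.Walk a b) :
    0 < p.length → v ∈ p.support → ∃ w, G.Adj v w := by
  induction p with
  | nil => intro h; simp at h
  | cons h q ih =>
    intro _ hv
    rw [SimpleGraph.Walk.support_cons, List.mem_cons] at hv
    rcases hv with rfl | hv
    · exact ⟨_, h⟩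
    · cases q with
      | nil =>
        rw [SimpleGraph.Walk.support_nil, List.mem_singleton] at hv
        subst hv; exact ⟨_, h.symm⟩
      | cons h' q' => exact ih (by simp) hv

lemma cycle_two_neighbors {u : W} {c : G.Walk u u} (hc : c.IsCycle) :
    ∃ a b, a ≠ b ∧ G.Adj u a ∧ G.Adj u b ∧ a ∈ c.support ∧ b ∈ c.support := by
  have h3 := hc.three_le_length
  cases c with
  | nil => exact absurd rfl hc.ne_nil
  | @cons _ b0 _ h q =>
    rw [SimpleGraph.Walk.cons_isCycle_iff] at hc
    have hq : q.IsPath := hc.1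
    have hql : 2 ≤ q.length := by
      simp only [SimpleGraph.Walk.length_cons] at h3; omega
    have hrnn : ¬ q.reverse.Nil := by
      rw [SimpleGraph.Walk.not_nil_iff_lt_length, SimpleGraph.Walk.length_reverse]; omega
    obtain ⟨b2, h2, r2, hr2⟩ := SimpleGraph.Walk.not_nil_iff.mp hrnn
    have hr2path : r2.IsPath := by
      have := hq.reverse
      rw [hr2, SimpleGraph.Walk.cons_isPath_iff] at this
      exact this.1
    have hb2b : b2 ≠ b0 := by
      intro he
      subst he
      have := isPath_loop_eq_nil hr2path
      subst this
      have := congrArg SimpleGraph.Walk.length hr2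
      rw [SimpleGraph.Walk.length_reverse] at this
      simp at this
      omega
    have hb2mem : b2 ∈ q.support := by
      have : b2 ∈ q.reverse.support := by
        rw [hr2, SimpleGraph.Walk.support_cons]
        exact List.mem_cons_of_mem _ r2.start_mem_support
      rwa [SimpleGraph.Walk.support_reverse, List.mem_reverse] at this
    refine ⟨b0, b2, fun e => hb2b e.symm, h, h2, ?_, ?_⟩
    · rw [SimpleGraph.Walk.support_cons]
      exact List.mem_cons_of_mem _ q.start_mem_support
    · rw [SimpleGraph.Walk.support_cons]
      exact List.mem_cons_of_mem _ hb2mem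

lemma cycle_two_neighbors' [DecidableEq W] {u w : W} {c : G.Walk u u} (hc : c.IsCycle) (hw : w ∈ c.support) :
    ∃ a b, a ≠ b ∧ G.Adj w a ∧ G.Adj w b ∧ a ∈ c.support ∧ b ∈ c.support := by
  have hrot := hc.rotate hw
  obtain ⟨a, b, hab, ha, hb, has, hbs⟩ := cycle_two_neighbors hrot
  have hsub : ∀ v, v ∈ (c.rotate w hw).support → v ∈ c.support := by
    intro v hv
    rw [SimpleGraph.Walk.support_eq_cons, List.mem_cons] at hv
    rcases hv with rfl | hv
    · exact hw
    · have := (SimpleGraph.Walk.support_rotate c w hw).mem_iff.mp hv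
      exact List.mem_of_mem_tail this
  exact ⟨a, b, hab, ha, hb, hsub _ has, hsub _ hbs⟩

end WalkAux

lemma sum_image_le' {α β : Type*} [DecidableEq β] (S : Finset α) (f : α → β) (g : β → ℕ) :
    ∑ t ∈ S.image f, g t ≤ ∑ a ∈ S, g (f a) := by
  classical
  induction S using Finset.induction_on with
  | empty => simp
  | @insert a s ha ih =>
    rw [Finset.image_insert, Finset.sum_insert ha]
    by_cases h : f a ∈ s.image f
    · rw [Finset.insert_eq_self.mpr h]
      exact le_trans ih (Nat.le_add_left _ _)
    · rw [Finset.sum_insert h]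
      exact Nat.add_le_add_left ih _

section LevAux

variable {V : Type*} [DecidableEq V]

/-- The Levi graph as a function of the edge set alone. -/
def levG (S : Finset (Finset V)) : SimpleGraph (V ⊕ Finset V) where
  Adj a b :=
    match a, b with
    | Sum.inl x, Sum.inr s => s ∈ S ∧ x ∈ s
    | Sum.inr s, Sum.inl x => s ∈ S ∧ x ∈ s
    | _, _ => False
  symm := by constructor; rintro (x | s) (y | t) h <;> exact h
  loopless := by constructor; rintro (x | s) h <;> exact h

omit [DecidableEq V] in
lemma levG_adj {S : Finset (Finset V)} {a b : V ⊕ Finset V} (h : (levG S).Adj a b) :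
    (∃ x s, a = Sum.inl x ∧ b = Sum.inr s ∧ s ∈ S ∧ x ∈ s) ∨
    (∃ x s, a = Sum.inr s ∧ b = Sum.inl x ∧ s ∈ S ∧ x ∈ s) := by
  rcases a with x | s <;> rcases b with y | t
  · exact h.elim
  · exact Or.inl ⟨x, t, rfl, rfl, h.1, h.2⟩
  · exact Or.inr ⟨y, s, rfl, rfl, h.1, h.2⟩
  · exact h.elim

omit [DecidableEq V] in
lemma levG_adj_inl {S : Finset (Finset V)} {x : V} {a : V ⊕ Finset V}
    (h : (levG S).Adj (Sum.inl x) a) : ∃ s, a = Sum.inr s ∧ s ∈ S ∧ x ∈ s := by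
  rcases a with y | t
  · exact h.elim
  · exact ⟨t, rfl, h.1, h.2⟩

omit [DecidableEq V] in
lemma levG_adj_inr {S : Finset (Finset V)} {t : Finset V} {a : V ⊕ Finset V}
    (h : (levG S).Adj (Sum.inr t) a) : ∃ y, a = Sum.inl y ∧ t ∈ S ∧ y ∈ t := by
  rcases a with y | s
  · exact ⟨y, rfl, h.1, h.2⟩
  · exact h.elim

omit [DecidableEq V] in
lemma levG_adj_inl_inr {S : Finset (Finset V)} {x : V} {s : Finset V}
    (hs : s ∈ S) (hx : x ∈ s) : (levG S).Adj (Sum.inl x) (Sum.inr s) := ⟨hs, hx⟩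

omit [DecidableEq V] in
lemma levG_empty_acyclic : (levG (∅ : Finset (Finset V))).IsAcyclic := by
  intro u c hc
  cases c with
  | nil => exact hc.ne_nil rfl
  | cons h q =>
    rcases levG_adj h with ⟨_, _, _, _, hs, _⟩ | ⟨_, _, _, _, hs, _⟩ <;>
      exact absurd hs (Finset.notMem_empty _)

lemma inr_mem_support_mem {S : Finset (Finset V)} {u : V ⊕ Finset V}
    {c : (levG S).Walk u u} (hc : c.IsCycle) {t : Finset V}
    (hmem : Sum.inr t ∈ c.support) : t ∈ S := by
  have hpos : 0 < c.length := by have := hc.three_le_length; omega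
  obtain ⟨w, hadj⟩ := exists_adj_of_mem_support c hpos hmem
  obtain ⟨y, -, hts, -⟩ := levG_adj_inr hadj
  exact hts

lemma inr_two_elems {S : Finset (Finset V)} {u : V ⊕ Finset V}
    {c : (levG S).Walk u u} (hc : c.IsCycle) {t : Finset V}
    (hmem : Sum.inr t ∈ c.support) :
    ∃ y z, y ≠ z ∧ y ∈ t ∧ z ∈ t ∧ Sum.inl y ∈ c.support ∧ Sum.inl z ∈ c.support := by
  obtain ⟨a, b, hab, ha, hb, has, hbs⟩ := cycle_two_neighbors' hc hmem
  obtain ⟨y, rfl, -, hyt⟩ := levG_adj_inr ha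
  obtain ⟨z, rfl, -, hzt⟩ := levG_adj_inr hb
  exact ⟨y, z, fun h => hab (by rw [h]), hyt, hzt, has, hbs⟩

lemma inl_two_edges {S : Finset (Finset V)} {u : V ⊕ Finset V}
    {c : (levG S).Walk u u} (hc : c.IsCycle) {x : V}
    (hmem : Sum.inl x ∈ c.support) :
    ∃ s s', s ≠ s' ∧ s ∈ S ∧ s' ∈ S ∧ x ∈ s ∧ x ∈ s' := by
  obtain ⟨a, b, hab, ha, hb, -, -⟩ := cycle_two_neighbors' hc hmem
  obtain ⟨s, rfl, hsS, hxs⟩ := levG_adj_inl ha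
  obtain ⟨s', rfl, hsS', hxs'⟩ := levG_adj_inl hb
  exact ⟨s, s', fun h => hab (by rw [h]), hsS, hsS', hxs, hxs'⟩

/-- Lift a map on edge sets to the vertices of a Levi graph. -/
def mapInr (g : Finset V → Finset V) : V ⊕ Finset V → V ⊕ Finset V
  | Sum.inl y => Sum.inl y
  | Sum.inr t => Sum.inr (g t)

@[simp] lemma mapInr_inl (g : Finset V → Finset V) (y : V) :
    mapInr g (Sum.inl y) = Sum.inl y := rfl

@[simp] lemma mapInr_inr (g : Finset V → Finset V) (t : Finset V) :
    mapInr g (Sum.inr t) = Sum.inr (g t) := rfl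

/-- Linearity of an edge set. -/
def LinearS (S : Finset (Finset V)) : Prop :=
  ∀ s ∈ S, ∀ s' ∈ S, s ≠ s' → (s ∩ s').card ≤ 1

lemma step_linear {p q : Finset V × Finset (Finset V)} (hstep : GYOStep p q)
    (hlin : LinearS p.2) : LinearS q.2 := by
  cases hstep with
  | delVertex X S x hx hdeg =>
    intro t ht t' ht' hne
    obtain ⟨σ, hσ, rfl⟩ := Finset.mem_image.mp ht
    obtain ⟨σ', hσ', rfl⟩ := Finset.mem_image.mp ht'
    have hσne : σ ≠ σ' := fun h => hne (by rw [h])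
    calc (σ.erase x ∩ σ'.erase x).card ≤ (σ ∩ σ').card :=
          Finset.card_le_card
            (Finset.inter_subset_inter (Finset.erase_subset _ _) (Finset.erase_subset _ _))
      _ ≤ 1 := hlin σ hσ σ' hσ' hσne
  | delSubEdge X S s s' hs hs' hne hsub =>
    intro t ht t' ht' hne'
    exact hlin t (Finset.mem_of_mem_erase ht) t' (Finset.mem_of_mem_erase ht') hne'
  | delEmptyEdge X S h =>
    intro t ht t' ht' hne'
    exact hlin t (Finset.mem_of_mem_erase ht) t' (Finset.mem_of_mem_erase ht') hne'

lemma levG_mono {S' S : Finset (Finset V)} (hS : S' ⊆ S) (hacy : (levG S).IsAcyclic) :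
    (levG S').IsAcyclic := by
  intro u c hc
  have Hadj : ∀ a b, s(a, b) ∈ c.edges → (levG S).Adj (id a) (id b) := by
    intro a b he
    have hadj := c.adj_of_mem_edges he
    rcases levG_adj hadj with ⟨x, s, rfl, rfl, hs, hxs⟩ | ⟨x, s, rfl, rfl, hs, hxs⟩
    · exact ⟨hS hs, hxs⟩
    · exact ⟨hS hs, hxs⟩
  exact hacy _ (isCycle_mapWalk id c Hadj hc fun a _ b _ h => h)

end LevAux

section StepAux

variable {V : Type*} [DecidableEq V]

lemma step_acyclic_back {p q : Finset V × Finset (Finset V)} (hstep : GYOStep p q)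
    (hlin : LinearS p.2) (hacy : (levG q.2).IsAcyclic) : (levG p.2).IsAcyclic := by
  cases hstep with
  | delVertex X S x hx hdeg =>
    intro u c hc
    simp only at hlin hacy
    have hxnot : Sum.inl x ∉ c.support := by
      intro hmem
      obtain ⟨s, s', hne, hsS, hsS', hxs, hxs'⟩ := inl_two_edges hc hmem
      have : 1 < (S.filter fun t => x ∈ t).card := by
        refine Finset.one_lt_card.mpr ⟨s, ?_, s', ?_, hne⟩ <;>
          simp [Finset.mem_filter, hsS, hxs, hsS', hxs']
      omega
    have Hadj : ∀ a b, s(a, b) ∈ c.edges →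
        (levG (S.image fun s => s.erase x)).Adj
          (mapInr (fun t => t.erase x) a) (mapInr (fun t => t.erase x) b) := by
      intro a b he
      have hadj := c.adj_of_mem_edges he
      have hamem := c.fst_mem_support_of_mem_edges he
      have hbmem := c.snd_mem_support_of_mem_edges he
      rcases levG_adj hadj with ⟨y, s, rfl, rfl, hsS, hys⟩ | ⟨y, s, rfl, rfl, hsS, hys⟩
      · have hyx : y ≠ x := fun h => hxnot (h ▸ hamem)
        exact ⟨Finset.mem_image_of_mem _ hsS, Finset.mem_erase.mpr ⟨hyx, hys⟩⟩
      · have hyx : y ≠ x := fun h => hxnot (h ▸ hbmem)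
        exact ⟨Finset.mem_image_of_mem _ hsS, Finset.mem_erase.mpr ⟨hyx, hys⟩⟩
    have Hinj : ∀ a ∈ c.support, ∀ b ∈ c.support,
        mapInr (fun t => t.erase x) a = mapInr (fun t => t.erase x) b → a = b := by
      intro a ha b hb hfab
      rcases a with ya | ta <;> rcases b with yb | tb <;>
        simp only [mapInr_inl, mapInr_inr, Sum.inl.injEq, Sum.inr.injEq] at hfab ⊢
      · exact hfab
      · exact absurd hfab (by simp)
      · exact absurd hfab (by simp)
      · by_contra hne
        obtain ⟨y, z, hyz, hyt, hzt, hys, hzs⟩ := inr_two_elems hc ha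
        have hta : ta ∈ S := inr_mem_support_mem hc ha
        have htb : tb ∈ S := inr_mem_support_mem hc hb
        have hyx : y ≠ x := fun h => hxnot (h ▸ hys)
        have hzx : z ≠ x := fun h => hxnot (h ▸ hzs)
        have hy2 : y ∈ ta ∩ tb := by
          refine Finset.mem_inter.mpr ⟨hyt, ?_⟩
          have h' : y ∈ ta.erase x := Finset.mem_erase.mpr ⟨hyx, hyt⟩
          rw [hfab] at h'
          exact Finset.mem_of_mem_erase h'
        have hz2 : z ∈ ta ∩ tb := by
          refine Finset.mem_inter.mpr ⟨hzt, ?_⟩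
          have h' : z ∈ ta.erase x := Finset.mem_erase.mpr ⟨hzx, hzt⟩
          rw [hfab] at h'
          exact Finset.mem_of_mem_erase h'
        have h2 : 1 < (ta ∩ tb).card := Finset.one_lt_card.mpr ⟨y, hy2, z, hz2, hyz⟩
        have := hlin ta hta tb htb hne
        omega
    exact hacy _ (isCycle_mapWalk (mapInr fun t => t.erase x) c Hadj hc Hinj)
  | delSubEdge X S s s' hs hs' hne hsub =>
    intro u c hc
    simp only at hlin hacy
    have hcard : s.card ≤ 1 := by
      have := hlin s hs s' hs' hne
      rwa [Finset.inter_eq_left.mpr hsub] at this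
    have hsnot : Sum.inr s ∉ c.support := by
      intro hmem
      obtain ⟨y, z, hyz, hyt, hzt, -, -⟩ := inr_two_elems hc hmem
      have : 1 < s.card := Finset.one_lt_card.mpr ⟨y, hyt, z, hzt, hyz⟩
      omega
    have Hadj : ∀ a b, s(a, b) ∈ c.edges → (levG (S.erase s)).Adj (id a) (id b) := by
      intro a b he
      have hadj := c.adj_of_mem_edges he
      have hamem := c.fst_mem_support_of_mem_edges he
      have hbmem := c.snd_mem_support_of_mem_edges he
      rcases levG_adj hadj with ⟨y, t, rfl, rfl, htS, hyt⟩ | ⟨y, t, rfl, rfl, htS, hyt⟩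
      · have hts : t ≠ s := fun h => hsnot (h ▸ hbmem)
        exact ⟨Finset.mem_erase.mpr ⟨hts, htS⟩, hyt⟩
      · have hts : t ≠ s := fun h => hsnot (h ▸ hamem)
        exact ⟨Finset.mem_erase.mpr ⟨hts, htS⟩, hyt⟩
    exact hacy _ (isCycle_mapWalk id c Hadj hc fun a _ b _ h => h)
  | delEmptyEdge X S hmem =>
    intro u c hc
    simp only at hacy
    have hsnot : Sum.inr (∅ : Finset V) ∉ c.support := by
      intro hm
      obtain ⟨y, z, -, hy, -, -, -⟩ := inr_two_elems hc hm
      exact absurd hy (Finset.notMem_empty y)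
    have Hadj : ∀ a b, s(a, b) ∈ c.edges → (levG (S.erase ∅)).Adj (id a) (id b) := by
      intro a b he
      have hadj := c.adj_of_mem_edges he
      have hamem := c.fst_mem_support_of_mem_edges he
      have hbmem := c.snd_mem_support_of_mem_edges he
      rcases levG_adj hadj with ⟨y, t, rfl, rfl, htS, hyt⟩ | ⟨y, t, rfl, rfl, htS, hyt⟩
      · have hts : t ≠ ∅ := fun h => hsnot (h ▸ hbmem)
        exact ⟨Finset.mem_erase.mpr ⟨hts, htS⟩, hyt⟩
      · have hts : t ≠ ∅ := fun h => hsnot (h ▸ hamem)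
        exact ⟨Finset.mem_erase.mpr ⟨hts, htS⟩, hyt⟩
    exact hacy _ (isCycle_mapWalk id c Hadj hc fun a _ b _ h => h)

lemma step_acyclic_fwd {p q : Finset V × Finset (Finset V)} (hstep : GYOStep p q)
    (hacy : (levG p.2).IsAcyclic) : (levG q.2).IsAcyclic := by
  classical
  cases hstep with
  | delSubEdge X S s s' hs hs' hne hsub => exact levG_mono (Finset.erase_subset _ _) hacy
  | delEmptyEdge X S hmem => exact levG_mono (Finset.erase_subset _ _) hacy
  | delVertex X S x hx hdeg =>
    intro u c hc
    simp only at hacy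
    have hgex : ∀ t ∈ S.image (fun s => s.erase x), ∃ σ, σ ∈ S ∧ σ.erase x = t :=
      fun t ht => Finset.mem_image.mp ht
    set g : Finset V → Finset V := fun t =>
      if h : t ∈ S.image (fun s => s.erase x) then (hgex t h).choose else ∅ with hgdef
    have hg : ∀ t ∈ S.image (fun s => s.erase x), g t ∈ S ∧ (g t).erase x = t := by
      intro t ht
      simp only [hgdef, dif_pos ht]
      exact (hgex t ht).choose_spec
    have hsupmem : ∀ t, Sum.inr t ∈ c.support → t ∈ S.image (fun s => s.erase x) :=
      fun t ht => inr_mem_support_mem hc ht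
    have Hadj : ∀ a b, s(a, b) ∈ c.edges → (levG S).Adj (mapInr g a) (mapInr g b) := by
      intro a b he
      have hadj := c.adj_of_mem_edges he
      rcases levG_adj hadj with ⟨y, t, rfl, rfl, htT, hyt⟩ | ⟨y, t, rfl, rfl, htT, hyt⟩
      · obtain ⟨hgS, hge⟩ := hg t htT
        refine ⟨hgS, ?_⟩
        rw [← hge] at hyt
        exact Finset.mem_of_mem_erase hyt
      · obtain ⟨hgS, hge⟩ := hg t htT
        refine ⟨hgS, ?_⟩
        rw [← hge] at hyt
        exact Finset.mem_of_mem_erase hyt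
    have Hinj : ∀ a ∈ c.support, ∀ b ∈ c.support, mapInr g a = mapInr g b → a = b := by
      intro a ha b hb hfab
      rcases a with ya | ta <;> rcases b with yb | tb <;>
        simp only [mapInr_inl, mapInr_inr, Sum.inl.injEq, Sum.inr.injEq] at hfab ⊢
      · exact hfab
      · exact absurd hfab (by simp)
      · exact absurd hfab (by simp)
      · have h1 := (hg ta (hsupmem ta ha)).2
        have h2 := (hg tb (hsupmem tb hb)).2
        rw [← h1, ← h2, hfab]
    exact hacy _ (isCycle_mapWalk (mapInr g) c Hadj hc Hinj)

lemma acyclic_of_reduces {p : Finset V × Finset (Finset V)}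
    (h : Relation.ReflTransGen GYOStep p ((∅ : Finset V), (∅ : Finset (Finset V)))) :
    LinearS p.2 → (levG p.2).IsAcyclic := by
  induction h using Relation.ReflTransGen.head_induction_on with
  | refl => exact fun _ => levG_empty_acyclic
  | head hstep hrest ih =>
    intro hlin
    exact step_acyclic_back hstep hlin (ih (step_linear hstep hlin))

end StepAux

section ReduceAux

variable {V : Type*} [DecidableEq V]

lemma exists_leaf {S : Finset (Finset V)} (hne : S.Nonempty) (h2 : ∀ s ∈ S, 2 ≤ s.card)
    (hacy : (levG S).IsAcyclic) :
    ∃ x s, s ∈ S ∧ x ∈ s ∧ (S.filter fun t => x ∈ t).card ≤ 1 := by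
  classical
  obtain ⟨s0, hs0⟩ := hne
  have hs0pos : 0 < s0.card := by have := h2 s0 hs0; omega
  obtain ⟨x0, hx0⟩ := Finset.card_pos.mp hs0pos
  set N : Finset (V ⊕ Finset V) := (S.biUnion id).image Sum.inl ∪ S.image Sum.inr with hN
  have hmemN : ∀ v w : V ⊕ Finset V, (levG S).Adj v w → v ∈ N := by
    intro v w hvw
    rcases levG_adj hvw with ⟨x, s, rfl, -, hs, hxs⟩ | ⟨x, s, rfl, -, hs, -⟩
    · exact Finset.mem_union_left _
        (Finset.mem_image_of_mem _ (Finset.mem_biUnion.mpr ⟨s, hs, hxs⟩))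
    · exact Finset.mem_union_right _ (Finset.mem_image_of_mem _ hs)
  set L : Set ℕ := {n | ∃ (a b : V ⊕ Finset V) (p : (levG S).Walk a b), p.IsPath ∧ p.length = n}
    with hL
  have h1L : (1 : ℕ) ∈ L := by
    refine ⟨Sum.inl x0, Sum.inr s0,
      SimpleGraph.Walk.cons (levG_adj_inl_inr hs0 hx0) SimpleGraph.Walk.nil, ?_, rfl⟩
    simp [SimpleGraph.Walk.cons_isPath_iff]
  have hbdd : BddAbove L := by
    refine ⟨N.card, ?_⟩
    rintro n ⟨a, b, p, hp, rfl⟩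
    rcases Nat.eq_zero_or_pos p.length with h0 | hpos
    · omega
    · have hsub : p.support.toFinset ⊆ N := by
        intro v hv
        rw [List.mem_toFinset] at hv
        obtain ⟨w, hw⟩ := exists_adj_of_mem_support p hpos hv
        exact hmemN v w hw
      have hcard : p.support.toFinset.card = p.length + 1 := by
        rw [List.toFinset_card_of_nodup hp.support_nodup, SimpleGraph.Walk.length_support]
      have := Finset.card_le_card hsub
      omega
  have hnL : sSup L ∈ L := Nat.sSup_mem ⟨1, h1L⟩ hbdd
  have hn1 : 1 ≤ sSup L := le_csSup hbdd h1L
  obtain ⟨a, b, p, hp, hlen⟩ := hnL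
  have hnb : ∀ v, (levG S).Adj b v → v ∈ p.support := by
    intro v hv
    by_contra hvs
    have hpath : (SimpleGraph.Walk.cons hv.symm p.reverse).IsPath := by
      rw [SimpleGraph.Walk.cons_isPath_iff]
      exact ⟨hp.reverse, by rwa [SimpleGraph.Walk.support_reverse, List.mem_reverse]⟩
    have hmem : sSup L + 1 ∈ L :=
      ⟨v, a, _, hpath, by simp [SimpleGraph.Walk.length_reverse, hlen]⟩
    have := le_csSup hbdd hmem
    omega
  have hrnn : ¬ p.reverse.Nil := by
    rw [SimpleGraph.Walk.not_nil_iff_lt_length, SimpleGraph.Walk.length_reverse]; omega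
  obtain ⟨w, h2adj, q2, hq2⟩ := SimpleGraph.Walk.not_nil_iff.mp hrnn
  have hq2path : q2.IsPath ∧ b ∉ q2.support := by
    have h' := hp.reverse
    rw [hq2, SimpleGraph.Walk.cons_isPath_iff] at h'
    exact h'
  have huniq : ∀ v, (levG S).Adj b v → v = w := by
    intro v hv
    by_contra hvw
    have hvsup := hnb v hv
    have hvp := hp.dropUntil hvsup
    have hedge : s(b, v) ∉ (p.dropUntil v hvsup).edges := by
      intro hmem
      have hpe : s(b, v) ∈ p.edges := SimpleGraph.Walk.edges_dropUntil_subset _ _ hmem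
      have hre : s(b, v) ∈ p.reverse.edges := by
        rw [SimpleGraph.Walk.edges_reverse, List.mem_reverse]; exact hpe
      rw [hq2, SimpleGraph.Walk.edges_cons, List.mem_cons] at hre
      rcases hre with heq | hin
      · rw [Sym2.eq_iff] at heq
        rcases heq with ⟨-, h'⟩ | ⟨h', -⟩
        · exact hvw h'
        · exact h2adj.ne (h' ▸ rfl)
      · exact hq2path.2 (q2.fst_mem_support_of_mem_edges hin)
    have hcyc := SimpleGraph.Path.cons_isCycle ⟨p.dropUntil v hvsup, hvp⟩ hv hedge
    exact hacy _ hcyc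
  rcases levG_adj h2adj with ⟨y, s, hb, hw, hsS, hys⟩ | ⟨y, s, hb, hw, hsS, hys⟩
  · -- b = inl y : y is our leaf, its only edge is s
    subst hb; subst hw
    refine ⟨y, s, hsS, hys, ?_⟩
    have hsubf : S.filter (fun t => y ∈ t) ⊆ {s} := by
      intro t ht
      rw [Finset.mem_filter] at ht
      have := huniq (Sum.inr t) ⟨ht.1, ht.2⟩
      rw [Finset.mem_singleton]
      injection this
    calc (S.filter fun t => y ∈ t).card ≤ ({s} : Finset (Finset V)).card :=
          Finset.card_le_card hsubf
      _ = 1 := Finset.card_singleton s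
  · -- b = inr s : impossible, s has a second vertex
    subst hb; subst hw
    obtain ⟨z, hz, hzy⟩ := Finset.exists_mem_ne (show 1 < s.card by have := h2 s hsS; omega) y
    have := huniq (Sum.inl z) ⟨hsS, hz⟩
    rw [Sum.inl.injEq] at this
    exact (hzy this).elim

lemma gyo_reduce : ∀ (n : ℕ) (X : Finset V) (S : Finset (Finset V)),
    X.card + ∑ s ∈ S, (s.card + 1) ≤ n → (∀ s ∈ S, s ⊆ X) → (levG S).IsAcyclic →
    Relation.ReflTransGen GYOStep (X, S) ((∅ : Finset V), (∅ : Finset (Finset V))) := by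
  intro n
  induction n with
  | zero =>
    intro X S hm _ _
    have hX : X = ∅ := Finset.card_eq_zero.mp (by omega)
    have hS : S = ∅ := by
      by_contra h
      obtain ⟨s, hs⟩ := Finset.nonempty_iff_ne_empty.mpr h
      have h1 : s.card + 1 ≤ ∑ t ∈ S, (t.card + 1) :=
        Finset.single_le_sum (f := fun t => t.card + 1) (fun t _ => Nat.zero_le _) hs
      omega
    subst hX; subst hS; exact Relation.ReflTransGen.refl
  | succ n ih =>
    intro X S hm hsub hacy
    by_cases hS : S = ∅
    · subst hS
      by_cases hX : X = ∅
      · subst hX; exact Relation.ReflTransGen.refl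
      · obtain ⟨x, hx⟩ := Finset.nonempty_iff_ne_empty.mpr hX
        have hstep := GYOStep.delVertex X ∅ x hx (by simp)
        refine Relation.ReflTransGen.head hstep ?_
        rw [Finset.image_empty]
        refine ih (X.erase x) ∅ ?_ (by simp) levG_empty_acyclic
        have := Finset.card_erase_of_mem hx
        have hpos : 0 < X.card := Finset.card_pos.mpr ⟨x, hx⟩
        simp only [Finset.sum_empty] at hm ⊢
        omega
    · by_cases hemp : (∅ : Finset V) ∈ S
      · have hstep := GYOStep.delEmptyEdge X S hemp
        refine Relation.ReflTransGen.head hstep ?_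
        refine ih X (S.erase ∅) ?_
          (fun s hs => hsub s (Finset.mem_of_mem_erase hs))
          (levG_mono (Finset.erase_subset _ _) hacy)
        have hameq : (∑ t ∈ S.erase ∅, (t.card + 1)) + ((∅ : Finset V).card + 1)
            = ∑ t ∈ S, (t.card + 1) := Finset.sum_erase_add S (fun t => t.card + 1) hemp
        simp only [Finset.card_empty] at hameq
        omega
      · by_cases hcont : ∃ s ∈ S, ∃ s' ∈ S, s ≠ s' ∧ s ⊆ s'
        · obtain ⟨s, hs, s', hs', hne, hss⟩ := hcont
          have hstep := GYOStep.delSubEdge X S s s' hs hs' hne hss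
          refine Relation.ReflTransGen.head hstep ?_
          refine ih X (S.erase s) ?_
            (fun t ht => hsub t (Finset.mem_of_mem_erase ht))
            (levG_mono (Finset.erase_subset _ _) hacy)
          have hameq : (∑ t ∈ S.erase s, (t.card + 1)) + (s.card + 1)
              = ∑ t ∈ S, (t.card + 1) := Finset.sum_erase_add S (fun t => t.card + 1) hs
          omega
        · -- find a vertex of degree ≤ 1
          have hleaf : ∃ x s, s ∈ S ∧ x ∈ s ∧ (S.filter fun t => x ∈ t).card ≤ 1 := by
            by_cases h1 : ∃ s ∈ S, s.card = 1
            · obtain ⟨s, hs, hcard⟩ := h1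
              obtain ⟨x, hxeq⟩ := Finset.card_eq_one.mp hcard
              refine ⟨x, s, hs, by simp [hxeq], ?_⟩
              have hsubf : S.filter (fun t => x ∈ t) ⊆ {s} := by
                intro t ht
                rw [Finset.mem_filter] at ht
                rw [Finset.mem_singleton]
                by_contra htne
                exact hcont ⟨s, hs, t, ht.1, fun h => htne h.symm,
                  by rw [hxeq]; exact Finset.singleton_subset_iff.mpr ht.2⟩
              calc (S.filter fun t => x ∈ t).card ≤ ({s} : Finset (Finset V)).card :=
                    Finset.card_le_card hsubf
                _ = 1 := Finset.card_singleton s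
            · refine exists_leaf (Finset.nonempty_iff_ne_empty.mpr hS) ?_ hacy
              intro s hs
              have hne0 : s.card ≠ 0 := fun h => hemp (Finset.card_eq_zero.mp h ▸ hs)
              have hne1 : s.card ≠ 1 := fun h => h1 ⟨s, hs, h⟩
              omega
          obtain ⟨x, s, hsS, hxs, hdeg⟩ := hleaf
          have hxX : x ∈ X := hsub s hsS hxs
          have hstep := GYOStep.delVertex X S x hxX hdeg
          refine Relation.ReflTransGen.head hstep ?_
          refine ih (X.erase x) (S.image fun t => t.erase x) ?_ ?_
            (step_acyclic_fwd hstep hacy)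
          · have hsum1 : ∑ t ∈ S.image (fun t => t.erase x), (t.card + 1) ≤
                ∑ t ∈ S, ((t.erase x).card + 1) := sum_image_le' S _ _
            have hsum2 : ∑ t ∈ S, ((t.erase x).card + 1) ≤ ∑ t ∈ S, (t.card + 1) :=
              Finset.sum_le_sum fun t _ => by
                have := Finset.card_erase_le (s := t) (a := x); omega
            have hcx := Finset.card_erase_of_mem hxX
            have hpos : 0 < X.card := Finset.card_pos.mpr ⟨x, hxX⟩
            omega
          · intro t ht
            obtain ⟨σ, hσ, rfl⟩ := Finset.mem_image.mp ht
            exact Finset.erase_subset_erase x (hsub σ hσ)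

end ReduceAux

theorem statement_14 {V : Type*} [DecidableEq V] (H : FinHypergraph V)
    (hlin : H.Linear) : H.IsAlphaAcyclic ↔ H.Levi.IsAcyclic := by
  have hEq : H.Levi = levG H.edges := rfl
  constructor
  · intro h
    rw [hEq]
    exact acyclic_of_reduces h hlin
  · intro h
    rw [hEq] at h
    exact gyo_reduce (H.verts.card + ∑ s ∈ H.edges, (s.card + 1)) H.verts H.edges le_rfl
      H.edge_sub h
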